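/- arXiv:2403.18079 — 2 statements merged into one kernel-verified Lean document; each statement's English description precedes it below -/
import Mathlib

section
/- Let Γ be a finite n-player normal-form game, let x ∈ X be a strategy profile with Worse(x) = ∅, and let x_⋆ ∈ Access(x) be a profile such that every player i ∈ UnSat(x) best responds at x_⋆ (i.e., x_⋆^i is a best response to x_⋆^{-i} for all i ∈ UnSat(x)). Then there exists a sequence (y_t)_{t=1}^∞ with y_t ∈ NoBetter(x) for every t such that y_t → x_⋆ in X; equivalently, x_⋆ lies in the topological closure of NoBetter(x). -/
open Finset Function

variable {n : ℕ} {A : Fin n → Type*} [∀ i, Fintype (A i)]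

/-- `x` is a mixed strategy profile: each component lies in the probability simplex. -/
def IsProfile (x : ∀ i, A i → ℝ) : Prop :=
  ∀ i, x i ∈ stdSimplex ℝ (A i)

/-- Player `i`'s expected reward `R^i(x) = Σ_a r^i(a) ∏_j x^j(a^j)`. -/
noncomputable def expReward (r : Fin n → (∀ i, A i) → ℝ) (i : Fin n)
    (x : ∀ j, A j → ℝ) : ℝ :=
  ∑ a : ∀ j, A j, r i a * ∏ j, x j (a j)

/-- `y` is a best response for player `i` to the strategies `x^{-i}` of the others. -/
def IsBestResponse (r : Fin n → (∀ i, A i) → ℝ) (i : Fin n)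
    (y : A i → ℝ) (x : ∀ j, A j → ℝ) : Prop :=
  y ∈ stdSimplex ℝ (A i) ∧
    ∀ z ∈ stdSimplex ℝ (A i),
      expReward r i (Function.update x i z) ≤ expReward r i (Function.update x i y)

/-- Nash equilibrium: every player best responds. -/
def IsNash (r : Fin n → (∀ i, A i) → ℝ) (x : ∀ j, A j → ℝ) : Prop :=
  ∀ i, IsBestResponse r i (x i) x

-- The pure strategy `δ_a` placing probability 1 on action `a`.
open Classical in
noncomputable def pureStrat (i : Fin n) (a : A i) : A i → ℝ :=
  fun b => if b = a then 1 else 0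

/-- The set of satisfied players at `x`. -/
def Sat (r : Fin n → (∀ i, A i) → ℝ) (x : ∀ j, A j → ℝ) : Set (Fin n) :=
  {i | IsBestResponse r i (x i) x}

/-- The set of unsatisfied players at `x`. -/
def UnSat (r : Fin n → (∀ i, A i) → ℝ) (x : ∀ j, A j → ℝ) : Set (Fin n) :=
  (Sat r x)ᶜ

/-- Profiles accessible from `x`: satisfied players keep their strategies. -/
def Access (r : Fin n → (∀ i, A i) → ℝ) (x : ∀ j, A j → ℝ) :
    Set (∀ j, A j → ℝ) :=
  {y | IsProfile y ∧ ∀ i ∈ Sat r x, y i = x i}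

/-- Accessible profiles at which all previously unsatisfied players remain unsatisfied. -/
def NoBetter (r : Fin n → (∀ i, A i) → ℝ) (x : ∀ j, A j → ℝ) :
    Set (∀ j, A j → ℝ) :=
  {y ∈ Access r x | UnSat r x ⊆ UnSat r y}

/-- Accessible profiles strictly growing the set of unsatisfied players. -/
def Worse (r : Fin n → (∀ i, A i) → ℝ) (x : ∀ j, A j → ℝ) :
    Set (∀ j, A j → ℝ) :=
  {y ∈ NoBetter r x | UnSat r x ⊂ UnSat r y}

set_option linter.unusedSectionVars false
set_option maxHeartbeats 1000000

section Aux
open Polynomial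

lemma prod_update_eq (y : ∀ j, A j → ℝ) (i : Fin n) (z : A i → ℝ) (f : ∀ j, A j) :
    ∏ j, Function.update y i z j (f j)
      = z (f i) * ∏ j ∈ Finset.univ.erase i, y j (f j) := by
  rw [← Finset.mul_prod_erase Finset.univ _ (Finset.mem_univ i)]
  congr 1
  · rw [Function.update_self]
  · exact Finset.prod_congr rfl fun j hj => by
      rw [Function.update_of_ne (Finset.ne_of_mem_erase hj)]

lemma expReward_update_sum (r : Fin n → (∀ i, A i) → ℝ) (i : Fin n)
    (y : ∀ j, A j → ℝ) (z : A i → ℝ) :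
    expReward r i (Function.update y i z)
      = ∑ a, z a * expReward r i (Function.update y i (pureStrat i a)) := by
  classical
  unfold expReward
  simp_rw [prod_update_eq, pureStrat, Finset.mul_sum]
  rw [Finset.sum_comm]
  refine Finset.sum_congr rfl fun f _ => ?_
  rw [Finset.sum_congr rfl (fun a _ => ?_), Finset.sum_ite_eq' Finset.univ (f i)
    (fun a => z a * (r i f * ∏ j ∈ Finset.univ.erase i, y j (f j)))]
  · simp; ring
  · show z a * (r i f * ((if f i = a then (1:ℝ) else 0) * _)) = _
    by_cases h : f i = a
    · subst h; simp
    · simp [h, Ne.symm h]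

lemma continuous_expReward (r : Fin n → (∀ i, A i) → ℝ) (i : Fin n) :
    Continuous (expReward r i) := by
  unfold expReward
  exact continuous_finset_sum _ fun a _ => continuous_const.mul <|
    continuous_finset_prod _ fun j _ => (continuous_apply (a j)).comp (continuous_apply j)

lemma continuous_update' (i : Fin n) (w : A i → ℝ) :
    Continuous fun y : ∀ j, A j → ℝ => Function.update y i w := by
  refine continuous_pi fun j => ?_
  by_cases h : j = i
  · subst h; simpa [Function.update_self] using (continuous_const : Continuous fun _ : ∀ j, A j → ℝ => w)
  · simp only [Function.update_of_ne h]; exact continuous_apply j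

def Unhappy (r : Fin n → (∀ i, A i) → ℝ) (i : Fin n) (y : ∀ j, A j → ℝ) : Prop :=
  ∃ a : A i, expReward r i y < expReward r i (Function.update y i (pureStrat i a))

lemma isOpen_unhappy (r : Fin n → (∀ i, A i) → ℝ) (i : Fin n) :
    IsOpen {y | Unhappy r i y} := by
  have : {y | Unhappy r i y} = ⋃ a : A i,
      {y | expReward r i y < expReward r i (Function.update y i (pureStrat i a))} := by
    ext y; simp [Unhappy]
  rw [this]
  exact isOpen_iUnion fun a => isOpen_lt (continuous_expReward r i)
    ((continuous_expReward r i).comp (continuous_update' i (pureStrat i a)))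

lemma pureStrat_mem (i : Fin n) (a : A i) : pureStrat i a ∈ stdSimplex ℝ (A i) := by
  classical
  constructor
  · intro b; unfold pureStrat; split <;> norm_num
  · unfold pureStrat; rw [Finset.sum_ite_eq' Finset.univ a fun _ => (1:ℝ)]; simp

lemma unhappy_not_BR (r : Fin n → (∀ i, A i) → ℝ) (i : Fin n) (y : ∀ j, A j → ℝ)
    (h : Unhappy r i y) : ¬ IsBestResponse r i (y i) y := by
  rintro ⟨-, hopt⟩
  obtain ⟨a, ha⟩ := h
  have := hopt (pureStrat i a) (pureStrat_mem i a)
  rw [Function.update_eq_self] at this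
  linarith

lemma not_BR_unhappy (r : Fin n → (∀ i, A i) → ℝ) (i : Fin n) (y : ∀ j, A j → ℝ)
    (hy : y i ∈ stdSimplex ℝ (A i)) (h : ¬ IsBestResponse r i (y i) y) :
    Unhappy r i y := by
  rw [IsBestResponse] at h
  push_neg at h
  obtain ⟨z, hz, hlt⟩ := h hy
  rw [Function.update_eq_self] at hlt
  rw [expReward_update_sum] at hlt
  by_contra hc
  unfold Unhappy at hc; push_neg at hc
  have hb : ∑ a, z a * expReward r i (Function.update y i (pureStrat i a))
      ≤ ∑ a, z a * expReward r i y :=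
    Finset.sum_le_sum fun a _ => mul_le_mul_of_nonneg_left (hc a) (hz.1 a)
  rw [← Finset.sum_mul, hz.2, one_mul] at hb
  linarith

noncomputable def segP (x y : ∀ j, A j → ℝ) (t : ℝ) : ∀ j, A j → ℝ :=
  fun j c => y j c + t * (x j c - y j c)

lemma segP_one (x y : ∀ j, A j → ℝ) : segP x y 1 = x := by
  funext j c; simp [segP]

lemma segP_eq_comb (x y : ∀ j, A j → ℝ) (t : ℝ) (j : Fin n) :
    segP x y t j = (1 - t) • y j + t • x j := by
  funext c; simp [segP, smul_eq_mul]; ring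

noncomputable def evalPoly (r : Fin n → (∀ i, A i) → ℝ) (i : Fin n) (w : A i → ℝ)
    (x y : ∀ j, A j → ℝ) : Polynomial ℝ :=
  ∑ f : ∀ j, A j, C (r i f * w (f i)) *
    ∏ j ∈ Finset.univ.erase i, (C (y j (f j)) + X * C (x j (f j) - y j (f j)))

lemma evalPoly_eval (r : Fin n → (∀ i, A i) → ℝ) (i : Fin n) (w : A i → ℝ)
    (x y : ∀ j, A j → ℝ) (t : ℝ) :
    (evalPoly r i w x y).eval t = expReward r i (Function.update (segP x y t) i w) := by
  unfold evalPoly expReward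
  rw [Polynomial.eval_finset_sum]
  refine Finset.sum_congr rfl fun f _ => ?_
  rw [prod_update_eq]
  simp only [eval_mul, eval_C, eval_prod, eval_add, eval_X, segP]
  ring

-- coordinates of simplex members are in [0,1]
lemma simplex_coord_mem {ι : Type*} [Fintype ι] {v : ι → ℝ} (hv : v ∈ stdSimplex ℝ ι)
    (c : ι) : 0 ≤ v c ∧ v c ≤ 1 := by
  refine ⟨hv.1 c, ?_⟩
  calc v c ≤ ∑ d, v d := Finset.single_le_sum (fun d _ => hv.1 d) (Finset.mem_univ c)
  _ = 1 := hv.2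

-- ===== main induction =====
lemma key (r : Fin n → (∀ i, A i) → ℝ) (x : ∀ j, A j → ℝ) (hx : IsProfile x)
    (xs : ∀ j, A j → ℝ) (hxs : xs ∈ Access r x) (S : Finset (Fin n))
    (hS : ∀ i ∈ S, i ∈ UnSat r x) :
    ∀ ε : ℝ, 0 < ε → ∃ y, y ∈ Access r x ∧ dist y xs < ε ∧ ∀ i ∈ S, Unhappy r i y := by
  classical
  induction S using Finset.induction_on with
  | empty =>
      intro ε hε
      exact ⟨xs, hxs, by simpa using hε, by simp⟩
  | @insert i S' hiS ih =>
      intro ε hε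
      obtain ⟨y, hyA, hyd, hyU⟩ :=
        ih (fun j hj => hS j (Finset.mem_insert_of_mem hj)) (ε / 2) (by positivity)
      -- ball keeping S' unhappy
      have hopen : IsOpen (⋂ j ∈ S', {z | Unhappy r j z}) :=
        isOpen_biInter_finset fun j _ => isOpen_unhappy r j
      have hymem : y ∈ ⋂ j ∈ S', {z | Unhappy r j z} :=
        Set.mem_iInter₂.2 fun j hj => hyU j hj
      obtain ⟨η, hηpos, hball⟩ := Metric.isOpen_iff.1 hopen y hymem
      set ρ : ℝ := min η (ε / 2) with hρ
      have hρpos : 0 < ρ := lt_min hηpos (by positivity)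
      -- player i unhappy at x
      have hiU : i ∈ UnSat r x := hS i (Finset.mem_insert_self i S')
      have hxunh : Unhappy r i x := not_BR_unhappy r i x (hx i) hiU
      obtain ⟨a, ha⟩ := hxunh
      -- exists b with different pure value at x
      have hsum : expReward r i x
          = ∑ d, x i d * expReward r i (Function.update x i (pureStrat i d)) := by
        conv_lhs => rw [← Function.update_eq_self i x]
        rw [expReward_update_sum]
      have hab : ∃ b, expReward r i (Function.update x i (pureStrat i b))
          ≠ expReward r i (Function.update x i (pureStrat i a)) := by
        by_contra hc
        push_neg at hc
        rw [hsum] at ha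
        have : ∑ d, x i d * expReward r i (Function.update x i (pureStrat i d))
            = expReward r i (Function.update x i (pureStrat i a)) := by
          rw [Finset.sum_congr rfl fun d _ => by rw [hc d], ← Finset.sum_mul, (hx i).2, one_mul]
        linarith
      obtain ⟨b, hb⟩ := hab
      -- the polynomial
      set P : Polynomial ℝ := evalPoly r i (pureStrat i a) x y - evalPoly r i (pureStrat i b) x y
        with hPdef
      have hP1 : P.eval 1 ≠ 0 := by
        rw [hPdef, Polynomial.eval_sub, evalPoly_eval, evalPoly_eval, segP_one]
        exact sub_ne_zero.2 (Ne.symm hb)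
      have hPne : P ≠ 0 := fun h => hP1 (by rw [h]; simp)
      -- pick t
      obtain ⟨t, htmem, htroot⟩ : ∃ t ∈ Set.Ioo (0:ℝ) (min (ρ/2) 1), P.eval t ≠ 0 := by
        by_contra hc
        push_neg at hc
        have hsub : Set.Ioo (0:ℝ) (min (ρ/2) 1) ⊆ {u | P.IsRoot u} := fun u hu => hc u hu
        exact (Polynomial.finite_setOf_isRoot hPne).not_infinite
          ((Set.Ioo_infinite (by positivity : (0:ℝ) < min (ρ/2) 1)).mono hsub)
      set w := segP x y t with hwdef
      have ht0 : 0 < t := htmem.1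
      have ht1 : t ≤ 1 := le_of_lt (lt_of_lt_of_le htmem.2 (min_le_right _ _))
      have htρ : t < ρ / 2 := lt_of_lt_of_le htmem.2 (min_le_left _ _)
      -- w is a profile in Access
      have hwj : ∀ j, w j ∈ stdSimplex ℝ (A j) := by
        intro j
        rw [hwdef, segP_eq_comb]
        exact (convex_stdSimplex ℝ (A j)) (hyA.1 j) (hx j) (by linarith) (by linarith) (by ring)
      have hwacc : w ∈ Access r x := by
        refine ⟨hwj, fun j hj => ?_⟩
        have := hyA.2 j hj
        funext c
        rw [hwdef]; show y j c + t * (x j c - y j c) = x j c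
        rw [this]; ring
      -- dist w y ≤ t
      have hdist_wy : dist w y ≤ t := by
        rw [dist_pi_le_iff ht0.le]
        intro j
        rw [dist_pi_le_iff ht0.le]
        intro c
        rw [Real.dist_eq, hwdef]
        show |y j c + t * (x j c - y j c) - y j c| ≤ t
        have h1 := simplex_coord_mem (hx j) c
        have h2 := simplex_coord_mem (hyA.1 j) c
        have : |x j c - y j c| ≤ 1 := abs_sub_le_iff.2 ⟨by linarith, by linarith⟩
        calc |y j c + t * (x j c - y j c) - y j c| = t * |x j c - y j c| := by
              rw [show y j c + t * (x j c - y j c) - y j c = t * (x j c - y j c) by ring,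
                abs_mul, abs_of_pos ht0]
        _ ≤ t * 1 := by nlinarith
        _ = t := mul_one t
      -- pure values at w are nonconstant
      set cw : A i → ℝ := fun d => expReward r i (Function.update w i (pureStrat i d)) with hcw
      have hcwne : cw a ≠ cw b := by
        intro h
        apply htroot
        rw [hPdef, Polynomial.eval_sub, evalPoly_eval, evalPoly_eval, ← hwdef]
        exact sub_eq_zero.2 h
      obtain ⟨amax, -, hmax⟩ := Finset.exists_max_image Finset.univ cw ⟨a, Finset.mem_univ a⟩
      have hmax' : ∀ d, cw d ≤ cw amax := fun d => hmax d (Finset.mem_univ d)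
      have hbw : ∃ b', cw b' < cw amax := by
        rcases lt_or_ge (cw a) (cw amax) with h | h
        · exact ⟨a, h⟩
        · have hea : cw a = cw amax := le_antisymm (hmax' a) h
          exact ⟨b, lt_of_le_of_ne (hmax' b) fun he => hcwne (by rw [hea, he])⟩
      obtain ⟨b', hb'⟩ := hbw
      set s0 : ℝ := min (ρ/2) 1 / 2 with hs0def
      have hs0pos : 0 < s0 := by positivity
      have hs0le1 : s0 ≤ 1 := by
        rw [hs0def]; have : min (ρ/2) 1 ≤ 1 := min_le_right _ _; linarith
      have hs0ρ : s0 < ρ / 2 := by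
        rw [hs0def]
        have h1 : min (ρ/2) 1 ≤ ρ/2 := min_le_left _ _
        linarith
      set z : A i → ℝ := fun d => w i d + s0 * (pureStrat i b' d - w i d) with hzdef
      set Y : ∀ j, A j → ℝ := Function.update w i z with hYdef
      have hz : z ∈ stdSimplex ℝ (A i) := by
        have hzc : z = (1 - s0) • w i + s0 • pureStrat i b' := by
          funext d; simp [hzdef, smul_eq_mul]; ring
        rw [hzc]
        exact (convex_stdSimplex ℝ (A i)) (hwj i) (pureStrat_mem i b')
          (by linarith) (by linarith) (by ring)
      have hYA : Y ∈ Access r x := by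
        constructor
        · intro j
          by_cases h : j = i
          · subst h; rw [hYdef, Function.update_self]; exact hz
          · rw [hYdef, Function.update_of_ne h]; exact hwj j
        · intro j hj
          have hji : j ≠ i := fun he => (he ▸ hiU) hj
          rw [hYdef, Function.update_of_ne hji]
          exact hwacc.2 j hj
      have hdist_Yw : dist Y w ≤ s0 := by
        rw [dist_pi_le_iff hs0pos.le]
        intro j
        by_cases h : j = i
        · rw [h, hYdef, Function.update_self, dist_pi_le_iff hs0pos.le]
          intro c
          rw [Real.dist_eq, hzdef]
          show |w i c + s0 * (pureStrat i b' c - w i c) - w i c| ≤ s0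
          have h1 := simplex_coord_mem (hwj i) c
          have h2 := simplex_coord_mem (pureStrat_mem i b') c
          have habs : |pureStrat i b' c - w i c| ≤ 1 := abs_sub_le_iff.2 ⟨by linarith, by linarith⟩
          calc |w i c + s0 * (pureStrat i b' c - w i c) - w i c|
              = s0 * |pureStrat i b' c - w i c| := by
                rw [show w i c + s0 * (pureStrat i b' c - w i c) - w i c
                    = s0 * (pureStrat i b' c - w i c) by ring, abs_mul, abs_of_pos hs0pos]
          _ ≤ s0 * 1 := by nlinarith
          _ = s0 := mul_one s0
        · rw [hYdef, Function.update_of_ne h]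
          simpa using hs0pos.le
      have hdist_Yy : dist Y y < ρ := by
        calc dist Y y ≤ dist Y w + dist w y := dist_triangle _ _ _
        _ ≤ s0 + t := add_le_add hdist_Yw hdist_wy
        _ < ρ/2 + ρ/2 := add_lt_add hs0ρ htρ
        _ = ρ := by ring
      have hdist_Yxs : dist Y xs < ε := by
        calc dist Y xs ≤ dist Y y + dist y xs := dist_triangle _ _ _
        _ < ρ + ε/2 := add_lt_add hdist_Yy hyd
        _ ≤ ε/2 + ε/2 := by
            have : ρ ≤ ε/2 := min_le_right _ _
            linarith
        _ = ε := by ring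
      have hYi : Unhappy r i Y := by
        refine ⟨amax, ?_⟩
        have h1 : Function.update Y i (pureStrat i amax)
            = Function.update w i (pureStrat i amax) := by
          rw [hYdef, Function.update_idem]
        have h2 : expReward r i Y = ∑ d, z d * cw d := by
          rw [hYdef]; exact expReward_update_sum r i w z
        have hWsum : ∑ d, w i d * cw d ≤ cw amax := by
          calc ∑ d, w i d * cw d ≤ ∑ d, w i d * cw amax :=
              Finset.sum_le_sum fun d _ =>
                mul_le_mul_of_nonneg_left (hmax' d) ((hwj i).1 d)
          _ = cw amax := by rw [← Finset.sum_mul, (hwj i).2, one_mul]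
        have hpure : ∑ d, pureStrat i b' d * cw d = cw b' := by
          unfold pureStrat
          rw [Finset.sum_congr rfl fun d _ => by
            rw [ite_mul, one_mul, zero_mul]]
          rw [Finset.sum_ite_eq' Finset.univ b' cw]
          simp
        have hzsum : ∑ d, z d * cw d
            = (1 - s0) * (∑ d, w i d * cw d) + s0 * cw b' := by
          rw [hzdef]
          rw [Finset.sum_congr rfl fun d _ => show
            (w i d + s0 * (pureStrat i b' d - w i d)) * cw d
              = (1 - s0) * (w i d * cw d) + s0 * (pureStrat i b' d * cw d) by ring]
          rw [Finset.sum_add_distrib, ← Finset.mul_sum, ← Finset.mul_sum, hpure]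
        rw [h1, h2, hzsum]
        have : (1 - s0) * (∑ d, w i d * cw d) + s0 * cw b'
            ≤ (1 - s0) * cw amax + s0 * cw b' := by nlinarith
        have hlt : (1 - s0) * cw amax + s0 * cw b' < cw amax := by nlinarith
        calc (1 - s0) * (∑ d, w i d * cw d) + s0 * cw b'
            ≤ (1 - s0) * cw amax + s0 * cw b' := this
        _ < cw amax := hlt
        _ = expReward r i (Function.update w i (pureStrat i amax)) := rfl
      refine ⟨Y, hYA, hdist_Yxs, ?_⟩
      intro j hj
      rcases Finset.mem_insert.1 hj with h | h
      · subst h; exact hYi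
      · have hmem : Y ∈ Metric.ball y η := by
          have : ρ ≤ η := min_le_left _ _
          exact Metric.mem_ball.2 (lt_of_lt_of_le hdist_Yy this)
        exact Set.mem_iInter₂.1 (hball hmem) j h


end Aux

theorem equilibrium_on_boundary_of_noBetter [∀ i, Nonempty (A i)]
    (r : Fin n → (∀ i, A i) → ℝ) (x : ∀ j, A j → ℝ) (hx : IsProfile x)
    (hW : Worse r x = ∅) (xs : ∀ j, A j → ℝ) (hxs : xs ∈ Access r x)
    (hbr : ∀ i ∈ UnSat r x, IsBestResponse r i (xs i) xs) :
    (∃ y : ℕ → ∀ j, A j → ℝ, (∀ t, y t ∈ NoBetter r x) ∧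
      Filter.Tendsto y Filter.atTop (nhds xs)) ∧
    xs ∈ closure (NoBetter r x) := by
  classical
  have hcl : xs ∈ closure (NoBetter r x) := by
    rw [Metric.mem_closure_iff]
    intro ε hε
    obtain ⟨y, hyA, hyd, hyU⟩ := key r x hx xs hxs
      (Finset.univ.filter (· ∈ UnSat r x)) (fun i hi => (Finset.mem_filter.1 hi).2) ε hε
    refine ⟨y, ⟨hyA, fun i hi => ?_⟩, by rwa [dist_comm]⟩
    exact unhappy_not_BR r i y (hyU i (Finset.mem_filter.2 ⟨Finset.mem_univ i, hi⟩))
  obtain ⟨u, hu1, hu2⟩ := mem_closure_iff_seq_limit.1 hcl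
  exact ⟨⟨u, hu1, hu2⟩, hcl⟩
end

section
/- Let Γ be a finite n-player normal-form game and let x_1 ∈ X be a strategy profile with UnSat(x_1) ≠ ∅. Then there exists a satisficing path (x_1, …, x_k) with k ≤ n such that UnSat(x_t) ⊊ UnSat(x_{t+1}) for every 1 ≤ t < k (so the set of unsatisfied players strictly grows along the path), and the terminal profile x_k satisfies either Sat(x_k) = ∅ or Worse(x_k) = ∅. -/
open Finset Function

variable {n : ℕ} {A : Fin n → Type*} [∀ i, Fintype (A i)]

lemma aux_path (r : Fin n → (∀ i, A i) → ℝ) :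
    ∀ d (x : ∀ i, A i → ℝ), IsProfile x → UnSat r x ≠ ∅ →
      n - (UnSat r x).ncard ≤ d →
    ∃ (k : ℕ) (y : ℕ → ∀ i, A i → ℝ),
      1 ≤ k ∧ k ≤ d + 1 ∧ y 1 = x ∧
      (∀ t, 1 ≤ t → t ≤ k → IsProfile (y t)) ∧
      (∀ t, 1 ≤ t → t < k → ∀ i, IsBestResponse r i (y t i) (y t) → y (t + 1) i = y t i) ∧
      (∀ t, 1 ≤ t → t < k → UnSat r (y t) ⊂ UnSat r (y (t + 1))) ∧
      (Sat r (y k) = ∅ ∨ Worse r (y k) = ∅) := by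
  intro d
  induction d with
  | zero =>
    intro x hx hne hcard
    refine ⟨1, fun _ => x, le_rfl, le_rfl, rfl, fun _ _ _ => hx,
      fun t h1 h2 => absurd h2 (by omega), fun t h1 h2 => absurd h2 (by omega), ?_⟩
    -- ncard (UnSat) ≥ n forces UnSat = univ hence Sat = ∅
    left
    have hle : n ≤ (UnSat r x).ncard := by omega
    have huniv : UnSat r x = Set.univ :=
      Set.eq_of_subset_of_ncard_le (Set.subset_univ _)
        (by rwa [Set.ncard_univ, Nat.card_eq_fintype_card, Fintype.card_fin])
        (Set.toFinite _)
    have h2 : (Sat r x)ᶜ = Set.univ := huniv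
    simpa using congrArg compl h2
  | succ d ih =>
    intro x hx hne hcard
    by_cases hterm : Sat r x = ∅ ∨ Worse r x = ∅
    · exact ⟨1, fun _ => x, le_rfl, by omega, rfl, fun _ _ _ => hx,
        fun t h1 h2 => absurd h2 (by omega), fun t h1 h2 => absurd h2 (by omega), hterm⟩
    push_neg at hterm
    obtain ⟨y₂, hy₂⟩ := hterm.2
    obtain ⟨⟨⟨hy₂prof, hy₂fix⟩, _⟩, hy₂ss⟩ := hy₂
    have hne₂ : UnSat r y₂ ≠ ∅ := by
      intro h
      rw [h] at hy₂ss
      exact (Set.nonempty_iff_ne_empty.mpr hne).ne_empty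
        (Set.subset_empty_iff.mp hy₂ss.subset)
    have hlt : (UnSat r x).ncard < (UnSat r y₂).ncard :=
      Set.ncard_lt_ncard hy₂ss (Set.toFinite _)
    have hcard₂ : n - (UnSat r y₂).ncard ≤ d := by omega
    obtain ⟨k', y', hk1, hk2, hy1, hprof, hsat, hgrow, hterm'⟩ := ih y₂ hy₂prof hne₂ hcard₂
    set Y : ℕ → ∀ i, A i → ℝ := fun t => if t ≤ 1 then x else y' (t - 1) with hYdef
    have hY1 : Y 1 = x := if_pos le_rfl
    have hY2 : ∀ t, 2 ≤ t → Y t = y' (t - 1) := fun t ht => if_neg (by omega)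
    refine ⟨k' + 1, Y, by omega, by omega, hY1, ?_, ?_, ?_, ?_⟩
    · intro t h1 h2
      by_cases h : t = 1
      · rw [h, hY1]; exact hx
      · rw [hY2 t (by omega)]
        exact hprof (t - 1) (by omega) (by omega)
    · intro t h1 h2 i hbr
      by_cases h : t = 1
      · subst h
        rw [hY1] at hbr
        rw [hY1, hY2 2 (by omega), show (2:ℕ) - 1 = 1 from rfl, hy1]
        exact hy₂fix i hbr
      · rw [hY2 t (by omega)] at hbr
        rw [hY2 t (by omega), hY2 (t + 1) (by omega),
          show t + 1 - 1 = (t - 1) + 1 by omega]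
        exact hsat (t - 1) (by omega) (by omega) i hbr
    · intro t h1 h2
      by_cases h : t = 1
      · subst h
        rw [hY1, hY2 2 (by omega), show (2:ℕ) - 1 = 1 from rfl, hy1]
        exact hy₂ss
      · rw [hY2 t (by omega), hY2 (t + 1) (by omega),
          show t + 1 - 1 = (t - 1) + 1 by omega]
        exact hgrow (t - 1) (by omega) (by omega)
    · rw [hY2 (k' + 1) (by omega), Nat.add_sub_cancel]
      exact hterm'

theorem exists_path_growing_unsat [∀ i, Nonempty (A i)]
    (r : Fin n → (∀ i, A i) → ℝ) (x₁ : ∀ i, A i → ℝ) (hx₁ : IsProfile x₁)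
    (hUnSat : UnSat r x₁ ≠ ∅) :
    ∃ (k : ℕ) (y : ℕ → ∀ i, A i → ℝ),
      1 ≤ k ∧ k ≤ n ∧ y 1 = x₁ ∧
      (∀ t, 1 ≤ t → t ≤ k → IsProfile (y t)) ∧
      (∀ t, 1 ≤ t → t < k → ∀ i, IsBestResponse r i (y t i) (y t) → y (t + 1) i = y t i) ∧
      (∀ t, 1 ≤ t → t < k → UnSat r (y t) ⊂ UnSat r (y (t + 1))) ∧
      (Sat r (y k) = ∅ ∨ Worse r (y k) = ∅) := by
  have hpos : 1 ≤ (UnSat r x₁).ncard :=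
    (Set.ncard_pos (Set.toFinite _)).mpr (Set.nonempty_iff_ne_empty.mpr hUnSat)
  have hn : 1 ≤ n := by
    obtain ⟨i, _⟩ := Set.nonempty_iff_ne_empty.mpr hUnSat
    exact i.pos
  obtain ⟨k, y, h1, h2, h3, h4, h5, h6, h7⟩ :=
    aux_path r (n - 1) x₁ hx₁ hUnSat (by omega)
  exact ⟨k, y, h1, by omega, h3, h4, h5, h6, h7⟩
end
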